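/- arXiv:1508.04093 — 5 statements merged into one kernel-verified Lean document; each statement's English description precedes it below -/
import Mathlib

section
/- Let f be a probability density function on ℝⁿ such that f ∈ L^α(ℝⁿ) for each α > 0, and define F(α) = log ∫_{ℝⁿ} f^α. For α > 0 let X_α be a random vector with density f_α = f^α / ∫ f^α. Then F is infinitely differentiable on (0, ∞), and for every α > 0 one has F''(α) = V(X_α)/α², where V(X_α) = Var(log f_α(X_α)) is the varentropy of X_α. -/
open MeasureTheory Real Set Filter Topology
open scoped Nat

/-! Differentiating under the integral sign, `G(β) = ∫ f^β` is smooth on `(0, ∞)` with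
`G⁽ᵏ⁾(β) = ∫ f^β (log f)^k`: the domination comes from `|log t|^k ≤ k! δ⁻ᵏ (t^δ + t^(-δ))`,
which trades powers of `log f` for slightly larger and smaller powers of `f`, all integrable.
Then `F = log G` has `F'' = (G'' G - G'^2) / G^2`, and since `log f_α = α log f - log G(α)` on
the support of `f`, the varentropy of `f_α` is `α²` times the same expression. -/

/-- The varentropy `V(X) = Var(log g(X)) = ∫ g (log g)² - (∫ g log g)²` of a random
vector `X` on `ℝⁿ` with density `g`. -/
noncomputable def varentropy {n : ℕ} (g : (Fin n → ℝ) → ℝ) : ℝ :=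
  (∫ x, g x * (Real.log (g x)) ^ 2) - (∫ x, g x * Real.log (g x)) ^ 2

/-- The tilted density `f_α = f^α / ∫ f^α`. -/
noncomputable def tilt {n : ℕ} (f : (Fin n → ℝ) → ℝ) (α : ℝ) : (Fin n → ℝ) → ℝ :=
  fun x => f x ^ α / ∫ y, f y ^ α

namespace Real

lemma abs_log_pow_le {t δ : ℝ} (ht : 0 < t) (hδ : 0 < δ) (k : ℕ) :
    |log t| ^ k ≤ k ! / δ ^ k * (t ^ δ + t ^ (-δ)) := by
  have hexp : |δ * log t| ^ k / k ! ≤ t ^ δ + t ^ (-δ) := by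
    calc |δ * log t| ^ k / k ! ≤ exp |δ * log t| :=
        Real.pow_div_factorial_le_exp _ (abs_nonneg _) k
      _ ≤ exp (δ * log t) + exp (-(δ * log t)) := exp_abs_le _
      _ = t ^ δ + t ^ (-δ) := by
        rw [rpow_def_of_pos ht, rpow_def_of_pos ht, mul_comm δ, mul_neg]
  rw [abs_mul, abs_of_pos hδ, mul_pow, div_le_iff₀ (by positivity)] at hexp
  rw [div_mul_eq_mul_div, le_div_iff₀ (by positivity)]
  linarith

lemma rpow_mul_abs_log_pow_le {t c δ : ℝ} (ht : 0 ≤ t) (hc : 0 < c) (hδ : 0 < δ) (k : ℕ) :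
    t ^ c * |log t| ^ k ≤ k ! / δ ^ k * (t ^ (c + δ) + t ^ (c - δ)) := by
  rcases ht.eq_or_lt with rfl | ht
  · rw [zero_rpow hc.ne', zero_mul]
    positivity
  calc t ^ c * |log t| ^ k ≤ t ^ c * (k ! / δ ^ k * (t ^ δ + t ^ (-δ))) := by
        gcongr; exact abs_log_pow_le ht hδ k
    _ = k ! / δ ^ k * (t ^ (c + δ) + t ^ (c - δ)) := by
        rw [rpow_add ht, sub_eq_add_neg, rpow_add ht]; ring

lemma rpow_le_rpow_add_rpow {t a b β : ℝ} (ht : 0 ≤ t) (ha : 0 < a) (haβ : a ≤ β)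
    (hβb : β ≤ b) :
    t ^ β ≤ t ^ a + t ^ b := by
  rcases ht.eq_or_lt with rfl | ht
  · rw [zero_rpow (ha.trans_le haβ).ne']
    positivity
  rcases le_total 1 t with h1 | h1
  · exact le_add_of_nonneg_of_le (rpow_nonneg ht.le a) (rpow_le_rpow_of_exponent_le h1 hβb)
  · exact le_add_of_le_of_nonneg (rpow_le_rpow_of_exponent_ge ht h1 haβ) (rpow_nonneg ht.le b)

lemma hasDerivAt_rpow_mul_log_pow {t β : ℝ} (ht : 0 ≤ t) (hβ : 0 < β) (k : ℕ) :
    HasDerivAt (fun b => t ^ b * log t ^ k) (t ^ β * log t ^ (k + 1)) β := by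
  rcases ht.eq_or_lt with rfl | ht
  · rw [zero_rpow hβ.ne', zero_mul]
    refine (hasDerivAt_const β (0 : ℝ)).congr_of_eventuallyEq ?_
    filter_upwards [eventually_gt_nhds hβ] with b hb
    rw [zero_rpow hb.ne', zero_mul]
  · exact ((hasStrictDerivAt_const_rpow ht β).hasDerivAt.mul_const (log t ^ k)).congr_deriv
      (by ring)

end Real

section PowLogIntegral

variable {Ω : Type*} [MeasurableSpace Ω] {μ : Measure Ω} {f : Ω → ℝ}

/-- `G_k(β) = ∫ f^β (log f)^k`, the `k`-th derivative of `G_0(β) = ∫ f^β`. -/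
noncomputable def powLogIntegral (μ : Measure Ω) (f : Ω → ℝ) (k : ℕ) (β : ℝ) : ℝ :=
  ∫ x, f x ^ β * log (f x) ^ k ∂μ

lemma powLogIntegral_zero : powLogIntegral μ f 0 = fun β => ∫ x, f x ^ β ∂μ := by
  ext β
  simp only [powLogIntegral, pow_zero, mul_one]

lemma aestronglyMeasurable_rpow_mul_log_pow (hf : AEMeasurable f μ) (c : ℝ) (k : ℕ) :
    AEStronglyMeasurable (fun x => f x ^ c * log (f x) ^ k) μ :=
  ((hf.pow_const c).mul (hf.log.pow_const k)).aestronglyMeasurable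

lemma integrable_rpow_mul_log_pow (hf_nonneg : ∀ x, 0 ≤ f x)
    (hf_int : ∀ α : ℝ, 0 < α → Integrable (fun x => f x ^ α) μ) {c : ℝ} (hc : 0 < c) (k : ℕ) :
    Integrable (fun x => f x ^ c * log (f x) ^ k) μ := by
  have hf : AEMeasurable f μ := by simpa using (hf_int 1 one_pos).aemeasurable
  have hbound : Integrable
      (fun x => k ! / (c / 2) ^ k * (f x ^ (c + c / 2) + f x ^ (c - c / 2))) μ :=
    ((hf_int _ (by positivity)).add (hf_int _ (by linarith))).const_mul _
  refine hbound.mono' (aestronglyMeasurable_rpow_mul_log_pow hf c k) (.of_forall fun x => ?_)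
  rw [norm_mul, norm_pow, norm_eq_abs, norm_eq_abs,
    abs_of_nonneg (rpow_nonneg (hf_nonneg x) c)]
  exact rpow_mul_abs_log_pow_le (hf_nonneg x) hc (half_pos hc) k

lemma hasDerivAt_powLogIntegral (hf_nonneg : ∀ x, 0 ≤ f x)
    (hf_int : ∀ α : ℝ, 0 < α → Integrable (fun x => f x ^ α) μ) (k : ℕ) {α : ℝ} (hα : 0 < α) :
    HasDerivAt (powLogIntegral μ f k) (powLogIntegral μ f (k + 1) α) α := by
  have hf : AEMeasurable f μ := by simpa using (hf_int 1 one_pos).aemeasurable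
  have hnear : ∀ β ∈ Ioo (α / 2) (3 * α / 2), 0 < β := fun β hβ => (half_pos hα).trans hβ.1
  refine (hasDerivAt_integral_of_dominated_loc_of_deriv_le
    (Ioo_mem_nhds (by linarith) (by linarith))
    (.of_forall fun β => aestronglyMeasurable_rpow_mul_log_pow hf β k)
    (integrable_rpow_mul_log_pow hf_nonneg hf_int hα k)
    (aestronglyMeasurable_rpow_mul_log_pow hf α (k + 1))
    (bound := fun x => ‖f x ^ (α / 2) * log (f x) ^ (k + 1)‖
      + ‖f x ^ (3 * α / 2) * log (f x) ^ (k + 1)‖) (.of_forall fun x β hβ => ?_)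
    ((integrable_rpow_mul_log_pow hf_nonneg hf_int (half_pos hα) _).norm.add
      (integrable_rpow_mul_log_pow hf_nonneg hf_int (by positivity) _).norm)
    (.of_forall fun x β hβ => hasDerivAt_rpow_mul_log_pow (hf_nonneg x) (hnear β hβ) k)).2
  simp only [norm_mul, ← add_mul, norm_eq_abs,
    abs_of_nonneg (rpow_nonneg (hf_nonneg x) _)]
  gcongr
  exact rpow_le_rpow_add_rpow (hf_nonneg x) (half_pos hα) hβ.1.le hβ.2.le

lemma contDiffOn_powLogIntegral (hf_nonneg : ∀ x, 0 ≤ f x)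
    (hf_int : ∀ α : ℝ, 0 < α → Integrable (fun x => f x ^ α) μ) (k : ℕ) :
    ContDiffOn ℝ (⊤ : ℕ∞) (powLogIntegral μ f k) (Ioi 0) := by
  suffices ∀ m : ℕ, ∀ k, ContDiffOn ℝ m (powLogIntegral μ f k) (Ioi 0) from
    contDiffOn_infty.mpr fun m => this m k
  intro m
  induction m with
  | zero =>
    exact fun k => contDiffOn_zero.mpr fun β hβ =>
      (hasDerivAt_powLogIntegral hf_nonneg hf_int k hβ).continuousAt.continuousWithinAt
  | succ m ih =>
    refine fun k => (contDiffOn_succ_iff_deriv_of_isOpen isOpen_Ioi).mpr ⟨fun β hβ =>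
      (hasDerivAt_powLogIntegral hf_nonneg hf_int k hβ).differentiableAt.differentiableWithinAt,
      by simp, (ih (k + 1)).congr fun β hβ => ?_⟩
    exact (hasDerivAt_powLogIntegral hf_nonneg hf_int k hβ).deriv

lemma integral_rpow_pos (hf_nonneg : ∀ x, 0 ≤ f x) (hf : 0 < ∫ x, f x ∂μ) {α : ℝ} (hα : 0 < α)
    (hfα : Integrable (fun x => f x ^ α) μ) : 0 < ∫ x, f x ^ α ∂μ := by
  have hsupp : Function.support (fun x => f x ^ α) = Function.support f := by
    ext x
    simp [rpow_eq_zero_iff_of_nonneg (hf_nonneg x), hα.ne']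
  rw [integral_pos_iff_support_of_nonneg (fun x => rpow_nonneg (hf_nonneg x) α) hfα, hsupp,
    ← integral_pos_iff_support_of_nonneg hf_nonneg (Integrable.of_integral_ne_zero hf.ne')]
  exact hf

end PowLogIntegral

lemma deriv_deriv_log_eq {G G' : ℝ → ℝ} {s : Set ℝ} {α G'' : ℝ} (hs : IsOpen s) (hα : α ∈ s)
    (hG : ∀ β ∈ s, HasDerivAt G (G' β) β) (hG_ne : ∀ β ∈ s, G β ≠ 0)
    (hG' : HasDerivAt G' G'' α) :
    deriv (deriv fun β => log (G β)) α = (G'' * G α - G' α ^ 2) / G α ^ 2 := by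
  have hderiv : deriv (fun β => log (G β)) =ᶠ[𝓝 α] fun β => G' β / G β :=
    eventually_of_mem (hs.mem_nhds hα) fun β hβ => ((hG β hβ).log (hG_ne β hβ)).deriv
  have hquot : HasDerivAt (fun β => G' β / G β) ((G'' * G α - G' α * G' α) / G α ^ 2) α :=
    hG'.div (hG α hα) (hG_ne α hα)
  rw [hderiv.deriv_eq, hquot.deriv, sq (G' α)]

section Tilt

variable {n : ℕ} {f : (Fin n → ℝ) → ℝ} {α : ℝ}

lemma tilt_mul_log_tilt_pow {x : Fin n → ℝ} (hfx : 0 ≤ f x) (hα : α ≠ 0)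
    (hG : ∫ y, f y ^ α ≠ 0) (k : ℕ) :
    tilt f α x * log (tilt f α x) ^ k
      = (∫ y, f y ^ α)⁻¹ * (f x ^ α * (α * log (f x) - log (∫ y, f y ^ α)) ^ k) := by
  rcases hfx.eq_or_lt with h | h
  · simp [tilt, ← h, zero_rpow hα]
  · rw [tilt, log_div (rpow_pos_of_pos h α).ne' hG, log_rpow h]
    ring

lemma varentropy_tilt (hf_nonneg : ∀ x, 0 ≤ f x)
    (hf_int : ∀ α : ℝ, 0 < α → Integrable (fun x => f x ^ α)) (hα : 0 < α)
    (hG : ∫ y, f y ^ α ≠ 0) :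
    varentropy (tilt f α) = α ^ 2 * (powLogIntegral volume f 2 α * powLogIntegral volume f 0 α
      - powLogIntegral volume f 1 α ^ 2) / powLogIntegral volume f 0 α ^ 2 := by
  have hG0 : powLogIntegral volume f 0 α = ∫ y, f y ^ α := congrFun powLogIntegral_zero α
  set G0 := ∫ y, f y ^ α
  set M := log G0
  have hI := integrable_rpow_mul_log_pow hf_nonneg hf_int hα
  have hmoment (k : ℕ) : ∫ x, tilt f α x * log (tilt f α x) ^ k
      = G0⁻¹ * ∫ x, f x ^ α * (α * log (f x) - M) ^ k :=
    (integral_congr_ae (.of_forall fun x =>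
      tilt_mul_log_tilt_pow (hf_nonneg x) hα.ne' hG k)).trans (integral_const_mul _ _)
  have h1 : ∫ x, f x ^ α * (α * log (f x) - M)
      = α * powLogIntegral volume f 1 α - M * powLogIntegral volume f 0 α := by
    simp only [powLogIntegral]
    rw [← integral_const_mul, ← integral_const_mul, ← integral_sub ((hI 1).const_mul _)
      ((hI 0).const_mul _)]
    congr 1 with x
    ring
  have h2 : ∫ x, f x ^ α * (α * log (f x) - M) ^ 2
      = α ^ 2 * powLogIntegral volume f 2 α - 2 * α * M * powLogIntegral volume f 1 α
        + M ^ 2 * powLogIntegral volume f 0 α := by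
    simp only [powLogIntegral]
    rw [← integral_const_mul, ← integral_const_mul, ← integral_const_mul,
      ← integral_sub ((hI 2).const_mul _) ((hI 1).const_mul _),
      ← integral_add _ ((hI 0).const_mul _)]
    · congr 1 with x
      ring
    · exact ((hI 2).const_mul _).sub ((hI 1).const_mul _)
  have hmoment1 := hmoment 1
  simp only [pow_one] at hmoment1
  rw [varentropy, hmoment 2, hmoment1, h1, h2, hG0]
  field_simp
  ring

end Tilt

theorem contDiffOn_and_second_deriv_log_moment_general {n : ℕ} (f : (Fin n → ℝ) → ℝ)
    (hf_nonneg : ∀ x, 0 ≤ f x)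
    (hf_prob : ∫ x, f x = 1)
    (hf_Lp : ∀ α : ℝ, 0 < α → Integrable (fun x => f x ^ α)) :
    ContDiffOn ℝ (⊤ : ℕ∞) (fun α : ℝ => Real.log (∫ x, f x ^ α)) (Set.Ioi 0) ∧
      ∀ α : ℝ, 0 < α →
        deriv (deriv (fun α : ℝ => Real.log (∫ x, f x ^ α))) α
          = varentropy (tilt f α) / α ^ 2 := by
  have hG_pos : ∀ β ∈ Ioi (0 : ℝ), 0 < ∫ x, f x ^ β := fun β hβ =>
    integral_rpow_pos hf_nonneg (by simp [hf_prob]) hβ (hf_Lp β hβ)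
  have hF : (fun α : ℝ => log (∫ x, f x ^ α)) = fun α => log (powLogIntegral volume f 0 α) := by
    rw [powLogIntegral_zero]
  rw [hF]
  have hG_ne : ∀ β ∈ Ioi (0 : ℝ), powLogIntegral volume f 0 β ≠ 0 := fun β hβ => by
    rw [powLogIntegral_zero]; exact (hG_pos β hβ).ne'
  refine ⟨(contDiffOn_powLogIntegral hf_nonneg hf_Lp 0).log hG_ne, fun α hα => ?_⟩
  rw [deriv_deriv_log_eq isOpen_Ioi hα
    (fun β hβ => hasDerivAt_powLogIntegral hf_nonneg hf_Lp 0 hβ) hG_ne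
    (hasDerivAt_powLogIntegral hf_nonneg hf_Lp 1 hα),
    varentropy_tilt hf_nonneg hf_Lp hα (hG_pos α hα).ne']
  field_simp

/-- If `f` is a probability density on `ℝⁿ` with `f ∈ L^α(ℝⁿ)` for every `α > 0`, and
`F(α) = log ∫ f^α`, then `F` is infinitely differentiable on `(0, ∞)` and
`F''(α) = V(X_α)/α²`, where `X_α` has the tilted density `f_α = f^α / ∫ f^α`. -/
theorem contDiffOn_and_second_deriv_log_moment {n : ℕ} (f : (Fin n → ℝ) → ℝ)
    (hf_meas : Measurable f) (hf_nonneg : ∀ x, 0 ≤ f x)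
    (hf_prob : ∫ x, f x = 1)
    (hf_Lp : ∀ α : ℝ, 0 < α → Integrable (fun x => f x ^ α)) :
    ContDiffOn ℝ (⊤ : ℕ∞) (fun α : ℝ => Real.log (∫ x, f x ^ α)) (Set.Ioi 0) ∧
      ∀ α : ℝ, 0 < α →
        deriv (deriv (fun α : ℝ => Real.log (∫ x, f x ^ α))) α
          = varentropy (tilt f α) / α ^ 2 :=
  contDiffOn_and_second_deriv_log_moment_general f hf_nonneg hf_prob hf_Lp
end

section
/- Let φ : ℝⁿ → [0, ∞] be positively homogeneous of degree 1 (i.e., φ(tx) = t φ(x) for all t > 0 and x ∈ ℝⁿ) and suppose f = e^{-φ} is a probability density function on ℝⁿ. If X has density f, then the random variable Y = φ(X) has the gamma distribution with shape parameter n and scale parameter 1, i.e., Y has density f_Y(t) = t^{n-1} e^{-t} / (n-1)! on (0, ∞). -/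
open MeasureTheory
open scoped ENNReal ProbabilityTheory

/-!
Homogeneity makes the sublevel sets `{φ ≤ t}` dilates of `{φ ≤ 1}`, so under Lebesgue measure
`φ` is distributed on `(0, ∞)` with density `c n t^{n-1}`, where `c = vol {φ ≤ 1}`. Weighting
by `e^{-φ}` multiplies this density by `e^{-t}`, which gives a multiple of the gamma law of
shape `n`; since `e^{-φ}` is a probability density, the multiple is `1`.
-/

open Set Filter Topology Module ProbabilityTheory
open scoped Pointwise

namespace MeasureTheory.Measure

theorem ext_of_Iic_of_ne_top {α : Type*} [TopologicalSpace α] {m : MeasurableSpace α}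
    [SecondCountableTopology α] [LinearOrder α] [OrderTopology α] [BorelSpace α] [NoMinOrder α]
    (μ ν : Measure α) (hμ : ∀ a, μ (Iic a) ≠ ∞) (h : ∀ a, μ (Iic a) = ν (Iic a)) :
    μ = ν := by
  refine ext_of_Ioc' μ ν
    (fun a b _ ↦ ne_top_of_le_ne_top (hμ b) (measure_mono Ioc_subset_Iic_self)) fun a b hab ↦ ?_
  rw [← Iic_sdiff_Iic, measure_sdiff (Iic_subset_Iic.2 hab.le) nullMeasurableSet_Iic (hμ a),
    measure_sdiff (Iic_subset_Iic.2 hab.le) nullMeasurableSet_Iic (h a ▸ hμ a), h, h]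

theorem map_withDensity_comp {α β : Type*} [MeasurableSpace α] [MeasurableSpace β]
    (μ : Measure α) {g : α → β} (hg : Measurable g) {h : β → ℝ≥0∞} (hh : Measurable h) :
    (μ.withDensity (h ∘ g)).map g = (μ.map g).withDensity h := by
  ext s hs
  rw [map_apply hg hs, withDensity_apply _ (hg hs), withDensity_apply _ hs,
    setLIntegral_map hs hh hg, Function.comp_def]

end MeasureTheory.Measure

theorem withDensity_pow_Iic {d : ℕ} (hd : 0 < d) (t : ℝ) :
    volume.withDensity (fun s : ℝ ↦ ENNReal.ofReal (if 0 < s then d * s ^ (d - 1) else 0))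
      (Iic t) = ENNReal.ofReal (max t 0 ^ d) := by
  rw [withDensity_apply _ measurableSet_Iic]
  rcases le_or_gt t 0 with ht | ht
  · rw [max_eq_right ht, zero_pow hd.ne', ENNReal.ofReal_zero]
    refine setLIntegral_eq_zero measurableSet_Iic fun s hs ↦ ?_
    simp [not_lt.2 (le_trans hs ht)]
  rw [max_eq_left ht.le, ← Iic_union_Ioc_eq_Iic ht.le,
    lintegral_union measurableSet_Ioc (Iic_disjoint_Ioc le_rfl),
    setLIntegral_eq_zero measurableSet_Iic fun s hs ↦ by simp [not_lt.2 (mem_Iic.1 hs)],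
    zero_add,
    setLIntegral_congr_fun measurableSet_Ioc fun s hs ↦ by rw [if_pos hs.1],
    ← ofReal_integral_eq_lintegral_ofReal, ← intervalIntegral.integral_of_le ht.le,
    intervalIntegral.integral_const_mul, integral_pow, Nat.sub_add_cancel hd, Nat.cast_pred hd,
    zero_pow hd.ne']
  · have : (d : ℝ) ≠ 0 := by positivity
    rw [sub_zero, sub_add_cancel, mul_div_cancel₀ _ this]
  · exact (by fun_prop : Continuous fun s : ℝ ↦ d * s ^ (d - 1)).integrableOn_Ioc
  · exact (ae_restrict_iff' measurableSet_Ioc).2 (ae_of_all _ fun s hs ↦ by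
      have := hs.1; positivity)

theorem gammaMeasure_natCast_one {n : ℕ} (hn : 0 < n) :
    gammaMeasure n 1 = volume.withDensity fun t : ℝ ↦
      ENNReal.ofReal (if 0 < t then t ^ (n - 1) * Real.exp (-t) / (n - 1).factorial else 0) := by
  -- the two densities differ at `t = 0` when `n = 1`, where `0 ^ (0 : ℝ) = 1`
  refine withDensity_congr_ae ?_
  filter_upwards [compl_mem_ae_iff.2 (measure_singleton (0 : ℝ))] with t ht
  rcases lt_or_gt_of_ne (mem_compl_singleton_iff.1 ht) with ht | ht
  · simp [gammaPDF_of_neg ht, not_lt.2 ht.le]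
  · have hΓ : Real.Gamma n = (n - 1).factorial := by
      rw [← Nat.succ_pred_eq_of_pos hn, Nat.cast_succ, Real.Gamma_nat_eq_factorial]; rfl
    rw [gammaPDF_of_nonneg ht.le, if_pos ht, hΓ, ← Nat.cast_pred hn]
    congr 1
    simp only [Real.rpow_natCast, one_mul]
    ring

theorem measure_le_one_ne_top_of_lintegral_exp_neg {α : Type*} [MeasurableSpace α]
    {μ : Measure α} {φ : α → ℝ≥0∞} (hφ : Measurable φ)
    (h : ∫⁻ x in {x | φ x ≠ ∞}, ENNReal.ofReal (Real.exp (-(φ x).toReal)) ∂μ ≠ ∞) :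
    μ {x | φ x ≤ 1} ≠ ∞ := by
  have hsub : {x | φ x ≤ 1} ⊆ {x | φ x ≠ ∞} := fun _ ↦ ne_top_of_le_ne_top ENNReal.one_ne_top
  have hmono : {x | φ x ≤ 1}
      ⊆ {x | ENNReal.ofReal (Real.exp (-1)) ≤ ENNReal.ofReal (Real.exp (-(φ x).toReal))} :=
    fun x (hx : φ x ≤ 1) ↦ ENNReal.ofReal_le_ofReal <| Real.exp_le_exp.2 <| neg_le_neg <|
      ENNReal.toReal_le_of_le_ofReal zero_le_one (ENNReal.ofReal_one ▸ hx)
  rw [← Measure.restrict_eq_self μ hsub]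
  refine ne_top_of_le_ne_top ?_ ((measure_mono hmono).trans (meas_ge_le_lintegral_div
    (by fun_prop) (by simp [Real.exp_pos]) ENNReal.ofReal_ne_top))
  exact (ENNReal.div_lt_top h (by simp [Real.exp_pos])).ne

def PosHomogeneous {E : Type*} [SMul ℝ E] (φ : E → ℝ≥0∞) : Prop :=
  ∀ t : ℝ, 0 < t → ∀ x, φ (t • x) = ENNReal.ofReal t * φ x

section PosHomogeneous

variable {E : Type*} [NormedAddCommGroup E] [NormedSpace ℝ E] [MeasurableSpace E] [BorelSpace E]
  [FiniteDimensional ℝ E] (μ : Measure E) [μ.IsAddHaarMeasure] {φ : E → ℝ≥0∞}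

theorem addHaar_sublevel_of_posHomogeneous (hφ : PosHomogeneous φ) {t : ℝ} (ht : 0 < t) :
    μ {x | φ x ≤ ENNReal.ofReal t}
      = ENNReal.ofReal (t ^ finrank ℝ E) * μ {x | φ x ≤ 1} := by
  have hset : {x | φ x ≤ ENNReal.ofReal t} = t • {x | φ x ≤ 1} := by
    ext x
    rw [mem_smul_set_iff_inv_smul_mem₀ ht.ne']
    change φ x ≤ _ ↔ φ _ ≤ 1
    rw [← ENNReal.mul_le_mul_iff_right (b := φ _) (c := 1) (ENNReal.ofReal_pos.2 ht).ne'
      ENNReal.ofReal_ne_top, ← hφ t ht, smul_inv_smul₀ ht.ne', mul_one]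
  rw [hset, Measure.addHaar_smul_of_nonneg μ ht.le]

theorem addHaar_setOf_eq_zero_of_posHomogeneous
    (hφ : PosHomogeneous φ) (hE : 0 < finrank ℝ E) (hc : μ {x | φ x ≤ 1} ≠ ∞) :
    μ {x | φ x = 0} = 0 := by
  have hlim : Tendsto (fun t : ℝ ↦ ENNReal.ofReal (t ^ finrank ℝ E) * μ {x | φ x ≤ 1})
      (𝓝[>] 0) (𝓝 0) := by
    have h := ENNReal.Tendsto.mul_const (ENNReal.tendsto_ofReal
      (((continuous_pow (finrank ℝ E)).tendsto 0).mono_left (nhdsWithin_le_nhds (s := Ioi 0))))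
      (Or.inr hc)
    simpa [zero_pow hE.ne'] using h
  refine nonpos_iff_eq_zero.1 (ge_of_tendsto hlim ?_)
  filter_upwards [self_mem_nhdsWithin] with t (ht : 0 < t)
  rw [← addHaar_sublevel_of_posHomogeneous μ hφ ht]
  exact measure_mono fun x (hx : φ x = 0) ↦ show φ x ≤ _ by simp [hx]

theorem map_toReal_restrict_Iic_of_posHomogeneous (hφm : Measurable φ)
    (hφ : PosHomogeneous φ) (hE : 0 < finrank ℝ E) (hc : μ {x | φ x ≤ 1} ≠ ∞) (t : ℝ) :
    (μ.restrict {x | φ x ≠ ∞}).map (fun x ↦ (φ x).toReal) (Iic t)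
      = ENNReal.ofReal (max t 0 ^ finrank ℝ E) * μ {x | φ x ≤ 1} := by
  have hA : MeasurableSet {x | φ x ≠ ∞} := hφm (measurableSet_singleton ∞).compl
  rw [Measure.map_apply hφm.ennreal_toReal measurableSet_Iic, Measure.restrict_apply' hA]
  rcases le_or_gt t 0 with ht | ht
  · rw [max_eq_right ht, zero_pow hE.ne', ENNReal.ofReal_zero, zero_mul]
    refine measure_mono_null (fun x ⟨hxt, hx⟩ ↦ ?_)
      (addHaar_setOf_eq_zero_of_posHomogeneous μ hφ hE hc)
    exact (ENNReal.toReal_eq_zero_iff _).1 (le_antisymm (le_trans hxt ht) ENNReal.toReal_nonneg)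
      |>.resolve_right hx
  · rw [max_eq_left ht.le, ← addHaar_sublevel_of_posHomogeneous μ hφ ht]
    congr 1
    ext x
    exact ⟨fun ⟨hxt, hx⟩ ↦ (ENNReal.le_ofReal_iff_toReal_le hx ht.le).2 hxt, fun hx ↦
      ⟨ENNReal.toReal_le_of_le_ofReal ht.le hx, ne_top_of_le_ne_top ENNReal.ofReal_ne_top hx⟩⟩

theorem map_toReal_restrict_of_posHomogeneous (hφm : Measurable φ)
    (hφ : PosHomogeneous φ) (hE : 0 < finrank ℝ E) (hc : μ {x | φ x ≤ 1} ≠ ∞) :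
    (μ.restrict {x | φ x ≠ ∞}).map (fun x ↦ (φ x).toReal) = μ {x | φ x ≤ 1} •
      volume.withDensity (fun s : ℝ ↦
        ENNReal.ofReal (if 0 < s then finrank ℝ E * s ^ (finrank ℝ E - 1) else 0)) := by
  refine Measure.ext_of_Iic_of_ne_top _ _ (fun t ↦ ?_) fun t ↦ ?_ <;>
    rw [map_toReal_restrict_Iic_of_posHomogeneous μ hφm hφ hE hc]
  · exact ENNReal.mul_ne_top ENNReal.ofReal_ne_top hc
  · rw [Measure.smul_apply, withDensity_pow_Iic hE, smul_eq_mul, mul_comm]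

theorem map_toReal_withDensity_exp_neg_of_posHomogeneous (hφm : Measurable φ)
    (hφ : PosHomogeneous φ) (hE : 0 < finrank ℝ E) (hc : μ {x | φ x ≤ 1} ≠ ∞) :
    ((μ.restrict {x | φ x ≠ ∞}).withDensity fun x ↦ ENNReal.ofReal (Real.exp (-(φ x).toReal))).map
        (fun x ↦ (φ x).toReal)
      = (μ {x | φ x ≤ 1} * (finrank ℝ E).factorial) • gammaMeasure (finrank ℝ E) 1 := by
  set d := finrank ℝ E
  have hexp : Measurable fun s : ℝ ↦ ENNReal.ofReal (Real.exp (-s)) := by fun_prop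
  have hpow : Measurable fun s : ℝ ↦ ENNReal.ofReal (if 0 < s then d * s ^ (d - 1) else 0) :=
    (Measurable.ite measurableSet_Ioi (by fun_prop) measurable_const).ennreal_ofReal
  set γ := fun s : ℝ ↦
    ENNReal.ofReal (if 0 < s then s ^ (d - 1) * Real.exp (-s) / (d - 1).factorial else 0)
  have hγ : Measurable γ :=
    (Measurable.ite measurableSet_Ioi (by fun_prop) measurable_const).ennreal_ofReal
  have hdens : (fun s : ℝ ↦ ENNReal.ofReal (if 0 < s then d * s ^ (d - 1) else 0))
      * (fun s ↦ ENNReal.ofReal (Real.exp (-s))) = (d.factorial : ℝ≥0∞) • γ := by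
    funext s
    simp only [γ, Pi.mul_apply, Pi.smul_apply, smul_eq_mul]
    split_ifs with hs
    · rw [← ENNReal.ofReal_mul (by positivity), ← ENNReal.ofReal_natCast,
        ← ENNReal.ofReal_mul (Nat.cast_nonneg _), ← Nat.mul_factorial_pred hE.ne', Nat.cast_mul]
      field_simp
    · simp
  rw [← Function.comp_def (fun s : ℝ ↦ ENNReal.ofReal (Real.exp (-s))),
    Measure.map_withDensity_comp _ hφm.ennreal_toReal hexp,
    map_toReal_restrict_of_posHomogeneous μ hφm hφ hE hc, withDensity_smul_measure,
    ← withDensity_mul _ hpow hexp, hdens, withDensity_smul _ hγ, gammaMeasure_natCast_one hE,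
    mul_smul]

end PosHomogeneous

theorem gamma_dist_of_homogeneous_potential_general {n : ℕ} (hn : 0 < n)
    (φ : (Fin n → ℝ) → ℝ≥0∞) (hφ_meas : Measurable φ)
    (hφ_hom : ∀ t : ℝ, 0 < t → ∀ x : Fin n → ℝ, φ (t • x) = ENNReal.ofReal t * φ x)
    (f : (Fin n → ℝ) → ℝ)
    (hf : ∀ x, f x = if φ x = ∞ then 0 else Real.exp (-(φ x).toReal))
    {Ω : Type*} [MeasureSpace Ω] [IsProbabilityMeasure (ℙ : Measure Ω)]
    (X : Ω → (Fin n → ℝ)) (hX_meas : Measurable X)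
    (hX_density : Measure.map X ℙ
      = volume.withDensity (fun x => ENNReal.ofReal (f x))) :
    Measure.map (fun ω => (φ (X ω)).toReal) ℙ
      = volume.withDensity (fun t : ℝ =>
          ENNReal.ofReal
            (if 0 < t then t ^ (n - 1) * Real.exp (-t) / (n - 1).factorial else 0)) := by
  have hψ : Measurable fun x ↦ (φ x).toReal := hφ_meas.ennreal_toReal
  have hA : MeasurableSet {x | φ x ≠ ∞} := hφ_meas (measurableSet_singleton ∞).compl
  have hdim : finrank ℝ (Fin n → ℝ) = n := finrank_fin_fun ℝ
  have hlaw : Measure.map (fun ω ↦ (φ (X ω)).toReal) ℙ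
      = ((volume.restrict {x | φ x ≠ ∞}).withDensity
          fun x ↦ ENNReal.ofReal (Real.exp (-(φ x).toReal))).map fun x ↦ (φ x).toReal := by
    change Measure.map ((fun x ↦ (φ x).toReal) ∘ X) ℙ = _
    rw [← Measure.map_map hψ hX_meas, hX_density, ← withDensity_indicator hA]
    congr 2 with x
    by_cases hx : φ x = ∞ <;> simp [hf x, hx]
  have hprob := Measure.isProbabilityMeasure_map (μ := ℙ) (hψ.comp hX_meas).aemeasurable
  rw [Function.comp_def, hlaw] at hprob
  have hc : volume {x | φ x ≤ 1} ≠ ∞ := by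
    have hmass := hprob.measure_univ
    rw [Measure.map_apply hψ MeasurableSet.univ, preimage_univ,
      withDensity_apply _ MeasurableSet.univ, Measure.restrict_univ] at hmass
    exact measure_le_one_ne_top_of_lintegral_exp_neg hφ_meas (hmass ▸ ENNReal.one_ne_top)
  rw [hlaw]
  rw [map_toReal_withDensity_exp_neg_of_posHomogeneous volume hφ_meas hφ_hom (by rwa [hdim]) hc,
    hdim] at hprob ⊢
  have := isProbabilityMeasure_gammaMeasure (a := n) (by positivity) one_pos
  have hnorm := hprob.measure_univ
  rw [Measure.smul_apply, measure_univ, smul_eq_mul, mul_one] at hnorm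
  rw [hnorm, one_smul, gammaMeasure_natCast_one hn]

/-- If `φ : ℝⁿ → [0, ∞]` is positively homogeneous of degree 1 and
`f = e^{-φ}` is a probability density on `ℝⁿ`, then for `X` with density `f`,
the random variable `Y = φ(X)` has the gamma distribution with shape `n` and
scale 1, i.e. `Y` has density `t^{n-1} e^{-t} / (n-1)!` on `(0, ∞)`. -/
theorem gamma_dist_of_homogeneous_potential {n : ℕ} (hn : 0 < n)
    (φ : (Fin n → ℝ) → ℝ≥0∞) (hφ_meas : Measurable φ)
    (hφ_hom : ∀ t : ℝ, 0 < t → ∀ x : Fin n → ℝ, φ (t • x) = ENNReal.ofReal t * φ x)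
    (f : (Fin n → ℝ) → ℝ)
    (hf : ∀ x, f x = if φ x = ∞ then 0 else Real.exp (-(φ x).toReal))
    (hf_prob : ∫ x, f x = 1)
    {Ω : Type*} [MeasureSpace Ω] [IsProbabilityMeasure (ℙ : Measure Ω)]
    (X : Ω → (Fin n → ℝ)) (hX_meas : Measurable X)
    (hX_density : Measure.map X ℙ
      = volume.withDensity (fun x => ENNReal.ofReal (f x))) :
    Measure.map (fun ω => (φ (X ω)).toReal) ℙ
      = volume.withDensity (fun t : ℝ =>
          ENNReal.ofReal
            (if 0 < t then t ^ (n - 1) * Real.exp (-t) / (n - 1).factorial else 0)) :=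
  gamma_dist_of_homogeneous_potential_general hn φ hφ_meas hφ_hom f hf X hX_meas hX_density
end

section
/- Let r : ℝ → (-∞, +∞] be defined by r(u) = u - log(1+u) for u > -1 and r(u) = +∞ for u ≤ -1. Then the Legendre transform r*(t) = sup_{u ∈ ℝ} (tu - r(u)) satisfies r*(t) = r(-t) for all t ∈ ℝ; i.e., r*(t) = -t - log(1-t) for t < 1 and r*(t) = +∞ for t ≥ 1. -/
/-- The rate function `r(u) = u - log(1+u)` for `u > -1`, and `r(u) = +∞` for `u ≤ -1`. -/
noncomputable def rate (u : ℝ) : EReal :=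
  if -1 < u then ((u - Real.log (1 + u) : ℝ) : EReal) else ⊤

/-!
For `t < 1` the bound `t u - r(u) ≤ -t - log(1-t)` is `log x ≤ x - 1` at `x = (1+u)(1-t)`, with
equality at `x = 1`, i.e. at `u = t / (1-t)`. For `t ≥ 1` the function `t u - r(u) ≥ log(1+u)`
is unbounded as `u → ∞`.
-/

open Real

lemma rate_of_lt {u : ℝ} (hu : -1 < u) : rate u = ((u - log (1 + u) : ℝ) : EReal) :=
  if_pos hu

lemma rate_of_le {u : ℝ} (hu : u ≤ -1) : rate u = ⊤ :=
  if_neg hu.not_gt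

lemma rate_neg (t : ℝ) :
    rate (-t) = if t < 1 then ((-t - log (1 - t) : ℝ) : EReal) else ⊤ := by
  split_ifs with ht
  · rw [rate_of_lt (by linarith), sub_eq_add_neg 1 t, add_comm 1]
  · exact rate_of_le (by linarith)

lemma mul_sub_rate_of_lt (t : ℝ) {u : ℝ} (hu : -1 < u) :
    ((t * u : ℝ) : EReal) - rate u = ((t * u - (u - log (1 + u)) : ℝ) : EReal) := by
  rw [rate_of_lt hu, ← EReal.coe_sub]

lemma mul_sub_rate_le_rate_neg {t : ℝ} (ht : t < 1) (u : ℝ) :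
    ((t * u : ℝ) : EReal) - rate u ≤ rate (-t) := by
  rcases le_or_gt u (-1) with hu | hu
  · simp [rate_of_le hu]
  rw [mul_sub_rate_of_lt t hu, rate_neg, if_pos ht, EReal.coe_le_coe_iff]
  have h1u : 0 < 1 + u := by linarith
  have h1t : 0 < 1 - t := by linarith
  have key := log_le_sub_one_of_pos (mul_pos h1u h1t)
  rw [log_mul h1u.ne' h1t.ne'] at key
  nlinarith

lemma mul_sub_rate_div_one_sub {t : ℝ} (ht : t < 1) :
    ((t * (t / (1 - t)) : ℝ) : EReal) - rate (t / (1 - t)) = rate (-t) := by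
  have h1t : 0 < 1 - t := by linarith
  have hu : -1 < t / (1 - t) := by
    rw [lt_div_iff₀ h1t]
    linarith
  have h1u : 1 + t / (1 - t) = (1 - t)⁻¹ := by
    field_simp
    ring
  rw [mul_sub_rate_of_lt t hu, rate_neg, if_pos ht, h1u, log_inv, EReal.coe_eq_coe_iff]
  field_simp
  ring

lemma le_mul_sub_rate_exp {t : ℝ} (ht : 1 ≤ t) (M : ℝ) :
    (M : EReal) ≤ ((t * exp M : ℝ) : EReal) - rate (exp M) := by
  have hexp := exp_pos M
  rw [mul_sub_rate_of_lt t (by linarith), EReal.coe_le_coe_iff]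
  have hlog : M ≤ log (1 + exp M) :=
    (log_exp M).symm.le.trans (log_le_log hexp (by linarith))
  nlinarith

lemma iSup_mul_sub_rate_of_one_le {t : ℝ} (ht : 1 ≤ t) :
    ⨆ u : ℝ, ((t * u : ℝ) : EReal) - rate u = ⊤ := by
  refine iSup_eq_top.mpr fun b hb => ?_
  obtain ⟨M, hbM, -⟩ := EReal.exists_between_coe_real hb
  exact ⟨exp M, hbM.trans_le (le_mul_sub_rate_exp ht M)⟩

/-- The Legendre transform of `r` satisfies `r*(t) = sup_u (tu - r(u)) = r(-t)` for all
`t ∈ ℝ`; i.e. `r*(t) = -t - log(1-t)` for `t < 1` and `r*(t) = +∞` for `t ≥ 1`. -/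
theorem legendre_rate :
    ∀ t : ℝ,
      (⨆ u : ℝ, ((t * u : ℝ) : EReal) - rate u) = rate (-t) ∧
        rate (-t) = if t < 1 then ((-t - Real.log (1 - t) : ℝ) : EReal) else ⊤ := by
  intro t
  refine ⟨?_, rate_neg t⟩
  rcases lt_or_ge t 1 with ht | ht
  · exact le_antisymm (iSup_le (mul_sub_rate_le_rate_neg ht))
      ((mul_sub_rate_div_one_sub ht).symm.le.trans (le_iSup_of_le _ le_rfl))
  · rw [iSup_mul_sub_rate_of_one_le ht, rate_of_le (by linarith)]
end

section
/- Let X be a random vector in ℝⁿ with a log-concave density f (and finite mean). Then ‖f‖_∞ ≤ e^n · f(E[X]), where ‖f‖_∞ is the essential supremum of f. -/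
/-!
Let `m` be the mean of `f`. It lies in the interior of the convex set `{f > 0}`, so the convex
function `-log f` has a subgradient `G` at `m`: `f x * exp (G (x - m)) ≤ f m` for all `x`.
Fix `y` and `0 < θ < 1`. Log-concavity gives `f y ^ θ * f x ^ (1 - θ) ≤ f (θ • y + (1 - θ) • x)`,
whose right side integrates to `(1 - θ) ^ (-n)`, while `f x ^ (1 - θ) ≥ f m ^ (-θ) * f x *
exp (θ * G (x - m))` integrates to at least `f m ^ (-θ)` by Jensen's inequality, since `G` is linear
and `m` is the mean. Hence `f y ^ θ * (1 - θ) ^ n ≤ f m ^ θ`, and `θ → 0` gives `f y ≤ eⁿ * f m`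
for every `y`.
-/

open MeasureTheory

/-- `f : ℝⁿ → [0,∞)` is log-concave, i.e. `f = e^{-U}` for some convex
`U : ℝⁿ → (-∞, +∞]`. -/
def LogConcave {n : ℕ} (f : (Fin n → ℝ) → ℝ) : Prop :=
  (∀ x, 0 ≤ f x) ∧
    ∀ x y : Fin n → ℝ, ∀ t : ℝ, 0 < t → t < 1 →
      f x ^ t * f y ^ (1 - t) ≤ f (t • x + (1 - t) • y)

open Set Filter Real

section ConvexAnalysis

variable {E : Type*} [NormedAddCommGroup E] [NormedSpace ℝ E]

theorem ConvexOn.exists_subgradient_of_mem_interior [FiniteDimensional ℝ E] {s : Set E}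
    {U : E → ℝ} {m : E} (hU : ConvexOn ℝ s U) (hm : m ∈ interior s) :
    ∃ G : E →L[ℝ] ℝ, ∀ x ∈ s, U m + G (x - m) ≤ U x := by
  set A : Set (E × ℝ) := {p | p.1 ∈ interior s ∧ U p.1 < p.2}
  have hA_convex : Convex ℝ A :=
    (hU.subset interior_subset hU.1.interior).convex_strict_epigraph
  have hA_open : IsOpen A := by
    have hcont : ContinuousOn (fun p : E × ℝ => p.2 - U p.1) (interior s ×ˢ univ) :=
      continuousOn_snd.sub (hU.continuousOn_interior.comp continuousOn_fst fun p hp => hp.1)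
    convert hcont.isOpen_inter_preimage (isOpen_interior.prod isOpen_univ)
      (isOpen_Ioi (a := 0)) using 1
    ext p
    simp [A]
  obtain ⟨ψ, hψ⟩ := geometric_hahn_banach_open_point hA_convex hA_open
    (fun h => lt_irrefl _ h.2 : (m, U m) ∉ A)
  set c := ψ (0, 1)
  have hψ_apply (x : E) (t : ℝ) : ψ (x, t) = ψ (x, 0) + t * c := by
    rw [← smul_eq_mul, ← map_smul, ← map_add]
    simp
  have hc : c < 0 := by
    have := hψ (m, U m + 1) ⟨hm, lt_add_one _⟩
    rw [hψ_apply, hψ_apply m (U m)] at this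
    linarith
  set G : E →L[ℝ] ℝ := (-c)⁻¹ • ψ.comp (.inl ℝ E ℝ)
  have hG (x : E) : G x = ψ (x, 0) / -c := by
    simp [G, div_eq_inv_mul]
  -- the epigraph separation is strict only above the graph, so pass to the limit `t ↓ U x`
  have hinterior : ∀ x ∈ interior s, U m + G (x - m) ≤ U x := by
    intro x hx
    refine le_of_forall_gt fun t ht => ?_
    have := hψ (x, t) ⟨hx, ht⟩
    rw [hψ_apply, hψ_apply m (U m)] at this
    have : (ψ (x, 0) - ψ (m, 0)) / -c < t - U m := by
      rw [div_lt_iff₀ (neg_pos.2 hc)]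
      nlinarith
    rw [map_sub, hG, hG, ← sub_div]
    linarith
  refine ⟨G, fun x hx => ?_⟩
  have hmid := hinterior _ (hU.1.combo_interior_self_mem_interior hm hx
    (by norm_num : (0 : ℝ) < 1 / 2) (by norm_num : (0 : ℝ) ≤ 1 / 2) (by norm_num))
  have hconv := hU.2 (interior_subset hm) hx (by norm_num : (0 : ℝ) ≤ 1 / 2)
    (by norm_num : (0 : ℝ) ≤ 1 / 2) (by norm_num)
  have hsub : (1 / 2 : ℝ) • m + (1 / 2 : ℝ) • x - m = (1 / 2 : ℝ) • (x - m) := by module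
  rw [hsub, map_smul, smul_eq_mul] at hmid
  simp only [smul_eq_mul] at hconv
  linarith

variable [MeasurableSpace E]

theorem one_le_integral_mul_exp [CompleteSpace E] {μ : Measure E} {f : E → ℝ}
    (hf0 : ∀ x, 0 ≤ f x) (hf1 : ∫ x, f x ∂μ = 1) (hmean : Integrable (fun x => f x • x) μ)
    (G : E →L[ℝ] ℝ)
    (hint : Integrable (fun x => f x * exp (G (x - ∫ y, f y • y ∂μ))) μ) :
    1 ≤ ∫ x, f x * exp (G (x - ∫ y, f y • y ∂μ)) ∂μ := by
  set m := ∫ y, f y • y ∂μ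
  have hf : Integrable f μ := .of_integral_ne_zero (by simp [hf1])
  have hGmean : Integrable (fun x => G (f x • x)) μ := G.integrable_comp hmean
  -- the tangent line `1 + t ≤ exp t` integrates to `1`, as `G` is linear and `m` is the mean
  have hlin : Integrable (fun x => G (f x • x) - f x * G m) μ := hGmean.sub (hf.mul_const _)
  have htangent : ∫ x, (f x + (G (f x • x) - f x * G m)) ∂μ = 1 := by
    rw [integral_add hf hlin, integral_sub hGmean (hf.mul_const _),
      G.integral_comp_comm hmean, integral_mul_const, hf1]
    ring
  rw [← htangent]
  refine integral_mono (hf.add hlin) hint fun x => ?_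
  have := mul_le_mul_of_nonneg_left (add_one_le_exp (G (x - m))) (hf0 x)
  simp only [map_sub, map_smul, smul_eq_mul] at this ⊢
  linarith

variable [BorelSpace E] [FiniteDimensional ℝ E]

theorem integral_smul_mem_interior_of_convex {μ : Measure E} [μ.IsAddHaarMeasure] {f : E → ℝ}
    (hf0 : ∀ x, 0 ≤ f x) (hS : Convex ℝ {x | 0 < f x}) (hf1 : ∫ x, f x ∂μ = 1)
    (hmean : Integrable (fun x => f x • x) μ) :
    ∫ x, f x • x ∂μ ∈ interior {x | 0 < f x} := by
  set S := {x | 0 < f x}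
  set m := ∫ x, f x • x ∂μ
  have hf : Integrable f μ := .of_integral_ne_zero (by simp [hf1])
  have hS_pos : μ S ≠ 0 := by
    intro h0
    have : f =ᵐ[μ] 0 := measure_mono_null (fun x hx => (hf0 x).lt_of_ne' hx) h0
    simp [integral_congr_ae this] at hf1
  have hS_interior : (interior S).Nonempty := by
    rw [hS.interior_nonempty_iff_affineSpan_eq_top]
    by_contra h
    exact hS_pos (measure_mono_null (subset_affineSpan ℝ S) (Measure.addHaar_affineSubspace μ _ h))
  by_contra hm
  obtain ⟨φ, hφ⟩ := geometric_hahn_banach_open_point hS.interior isOpen_interior hm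
  set g := fun x => f x * φ m - φ (f x • x)
  have hg_apply (x : E) : g x = f x * (φ m - φ x) := by
    simp only [g, map_smul, smul_eq_mul]
    ring
  have hφmean : Integrable (fun x => φ (f x • x)) μ := φ.integrable_comp hmean
  have hg_zero : ∫ x, g x ∂μ = 0 := by
    rw [integral_sub (hf.mul_const _) hφmean, integral_mul_const, hf1, φ.integral_comp_comm hmean]
    ring
  have hg_nonneg : 0 ≤ᵐ[μ] g := by
    have hfrontier : ∀ᵐ x ∂μ, x ∉ frontier S := measure_eq_zero_iff_ae_notMem.1
      (hS.addHaar_frontier μ)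
    filter_upwards [hfrontier] with x hx
    rw [Pi.zero_apply, hg_apply]
    rcases (hf0 x).eq_or_lt with hfx | hfx
    · simp [← hfx]
    · have : x ∈ interior S := by_contra fun h => hx ⟨subset_closure hfx, h⟩
      exact mul_nonneg hfx.le (sub_nonneg.2 (hφ x this).le)
  have hg_pos : 0 < ∫ x, g x ∂μ := by
    refine (integral_pos_iff_support_of_nonneg_ae hg_nonneg
      ((hf.mul_const _).sub hφmean)).2 ?_
    refine (isOpen_interior.measure_pos μ hS_interior).trans_le (measure_mono fun x hx => ?_)
    rw [Function.mem_support, hg_apply]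
    have hfx : x ∈ S := interior_subset hx
    exact (mul_pos hfx (sub_pos.2 (hφ x hx))).ne'
  exact hg_pos.ne' hg_zero

end ConvexAnalysis

theorem le_exp_mul_of_forall_rpow_mul_one_sub_pow_le {a b : ℝ} (n : ℕ) (ha : 0 ≤ a) (hb : 0 ≤ b)
    (h : ∀ θ : ℝ, 0 < θ → θ < 1 → a ^ θ * (1 - θ) ^ n ≤ b ^ θ) : a ≤ exp n * b := by
  -- take `θ = 1 / k`, raise to the `k`-th power and use `(1 - 1 / k) ^ k → exp (-1)`
  have hk : ∀ᶠ k : ℕ in atTop, a * ((1 + -1 / k) ^ k) ^ n ≤ b := by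
    filter_upwards [eventually_ge_atTop 2] with k hk
    have hk' : (1 : ℝ) < k := by exact_mod_cast hk
    have hθ : (k : ℝ)⁻¹ < 1 := inv_lt_one_of_one_lt₀ hk'
    have := pow_le_pow_left₀ (mul_nonneg (rpow_nonneg ha _) (pow_nonneg (sub_nonneg.2 hθ.le) n)) (h (k : ℝ)⁻¹ (by positivity) hθ) k
    rw [mul_pow, rpow_inv_natCast_pow ha (by omega), rpow_inv_natCast_pow hb (by omega),
      ← pow_mul, mul_comm n, pow_mul] at this
    rwa [neg_div, ← sub_eq_add_neg, one_div]
  have hlim := le_of_tendsto (((tendsto_one_add_div_pow_exp (-1)).pow n).const_mul a) hk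
  rw [← exp_nat_mul, mul_neg_one] at hlim
  calc a = exp n * (a * exp (-n)) := by
        rw [mul_left_comm, ← exp_add, add_neg_cancel, exp_zero, mul_one]
    _ ≤ exp n * b := by gcongr

namespace LogConcave

variable {n : ℕ} {f : (Fin n → ℝ) → ℝ}

theorem rpow_mul_rpow_le (hf : LogConcave f) (x y : Fin n → ℝ) {a b : ℝ} (ha : 0 ≤ a)
    (hb : 0 ≤ b) (hab : a + b = 1) : f x ^ a * f y ^ b ≤ f (a • x + b • y) := by
  obtain rfl : b = 1 - a := by linarith
  rcases ha.eq_or_lt with rfl | ha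
  · simp
  rcases hb.eq_or_lt with hb | hb
  · obtain rfl : a = 1 := by linarith
    simp
  exact hf.2 x y a ha (by linarith)

theorem convex_pos (hf : LogConcave f) : Convex ℝ {x | 0 < f x} :=
  fun x hx y hy _ _ ha hb hab =>
    (mul_pos (rpow_pos_of_pos hx _) (rpow_pos_of_pos hy _)).trans_le
      (hf.rpow_mul_rpow_le x y ha hb hab)

theorem convexOn_neg_log (hf : LogConcave f) :
    ConvexOn ℝ {x | 0 < f x} (fun x => -log (f x)) := by
  refine ⟨hf.convex_pos, fun x hx y hy a b ha hb hab => ?_⟩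
  have hx' : 0 < f x ^ a := rpow_pos_of_pos hx a
  have hy' : 0 < f y ^ b := rpow_pos_of_pos hy b
  have := log_le_log (mul_pos hx' hy') (hf.rpow_mul_rpow_le x y ha hb hab)
  rw [log_mul hx'.ne' hy'.ne', log_rpow hx, log_rpow hy] at this
  simp only [smul_eq_mul]
  linarith

theorem exists_mul_exp_le (hf : LogConcave f) {m : Fin n → ℝ}
    (hm : m ∈ interior {x | 0 < f x}) :
    ∃ G : (Fin n → ℝ) →L[ℝ] ℝ, ∀ x, f x * exp (G (x - m)) ≤ f m := by
  obtain ⟨G, hG⟩ := hf.convexOn_neg_log.exists_subgradient_of_mem_interior hm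
  have hfm : m ∈ {x | 0 < f x} := interior_subset hm
  refine ⟨G, fun x => ?_⟩
  rcases (hf.1 x).eq_or_lt with hfx | hfx
  · rw [← hfx, zero_mul]
    exact hfm.le
  · have := hG x hfx
    calc f x * exp (G (x - m)) = exp (log (f x) + G (x - m)) := by rw [exp_add, exp_log hfx]
      _ ≤ exp (log (f m)) := exp_le_exp.2 (by linarith)
      _ = f m := exp_log hfm

theorem rpow_mul_mul_exp_le (hf : LogConcave f) {m : Fin n → ℝ} {G : (Fin n → ℝ) →L[ℝ] ℝ}
    (hG : ∀ x, f x * exp (G (x - m)) ≤ f m) (x y : Fin n → ℝ) {θ : ℝ} (hθ0 : 0 < θ)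
    (hθ1 : θ < 1) :
    f y ^ θ * (f x * exp (θ * G (x - m))) ≤ f m ^ θ * f (θ • y + (1 - θ) • x) := by
  have hsplit : f x * exp (θ * G (x - m)) = (f x * exp (G (x - m))) ^ θ * f x ^ (1 - θ) := by
    rw [mul_rpow (hf.1 x) (exp_pos _).le, ← exp_mul, mul_comm θ, mul_right_comm,
      ← rpow_add' (hf.1 x) (by norm_num), add_sub_cancel, rpow_one]
  calc f y ^ θ * (f x * exp (θ * G (x - m)))
      = (f x * exp (G (x - m))) ^ θ * (f y ^ θ * f x ^ (1 - θ)) := by rw [hsplit]; ring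
    _ ≤ f m ^ θ * f (θ • y + (1 - θ) • x) :=
      mul_le_mul (rpow_le_rpow (mul_nonneg (hf.1 x) (exp_pos _).le) (hG x) hθ0.le)
        (hf.2 y x θ hθ0 hθ1) (mul_nonneg (rpow_nonneg (hf.1 y) _) (rpow_nonneg (hf.1 x) _))
        (rpow_nonneg (hf.1 m) θ)

theorem rpow_mul_one_sub_pow_le (hf : LogConcave f) (hf1 : ∫ x, f x = 1)
    (hmean : Integrable (fun x => f x • x)) (y : Fin n → ℝ) {θ : ℝ} (hθ0 : 0 < θ)
    (hθ1 : θ < 1) : f y ^ θ * (1 - θ) ^ n ≤ f (∫ x, f x • x) ^ θ := by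
  set m := ∫ x, f x • x
  rcases (hf.1 y).eq_or_lt with hfy | hfy
  · rw [← hfy, zero_rpow hθ0.ne', zero_mul]
    exact rpow_nonneg (hf.1 m) θ
  have hf_int : Integrable f := .of_integral_ne_zero (by simp [hf1])
  obtain ⟨G, hG⟩ := hf.exists_mul_exp_le
    (integral_smul_mem_interior_of_convex hf.1 hf.convex_pos hf1 hmean)
  have h1θ : 0 < 1 - θ := by linarith
  have hdil : ∫ x, f (θ • y + (1 - θ) • x) = ((1 - θ) ^ n)⁻¹ := by
    rw [Measure.integral_comp_smul volume (fun z => f (θ • y + z)), integral_add_left_eq_self, hf1,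
      Module.finrank_fin_fun, smul_eq_mul, mul_one, abs_of_pos (by positivity)]
  have hdil_int : Integrable (fun x => f (θ • y + (1 - θ) • x)) :=
    (hf_int.comp_add_left _).comp_smul h1θ.ne'
  have hpt (x : Fin n → ℝ) := hf.rpow_mul_mul_exp_le hG x y hθ0 hθ1
  have hexp_int : Integrable (fun x => f x * exp (θ * G (x - m))) := by
    refine (hdil_int.const_mul (f m ^ θ / f y ^ θ)).mono'
      (hf_int.aestronglyMeasurable.mul (by fun_prop : Continuous _).aestronglyMeasurable)
      (ae_of_all _ fun x => ?_)
    rw [norm_of_nonneg (mul_nonneg (hf.1 x) (exp_pos _).le), div_mul_eq_mul_div,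
      le_div_iff₀ (rpow_pos_of_pos hfy θ)]
    linear_combination hpt x
  calc f y ^ θ * (1 - θ) ^ n
      ≤ f y ^ θ * (∫ x, f x * exp (θ * G (x - m))) * (1 - θ) ^ n := by
        gcongr
        exact le_mul_of_one_le_right (rpow_pos_of_pos hfy θ).le
          (one_le_integral_mul_exp hf.1 hf1 hmean (θ • G) hexp_int)
    _ = (∫ x, f y ^ θ * (f x * exp (θ * G (x - m)))) * (1 - θ) ^ n := by
        rw [integral_const_mul]
    _ ≤ (∫ x, f m ^ θ * f (θ • y + (1 - θ) • x)) * (1 - θ) ^ n :=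
        mul_le_mul_of_nonneg_right
          (integral_mono (hexp_int.const_mul _) (hdil_int.const_mul _) hpt) (by positivity)
    _ = f m ^ θ := by
        rw [integral_const_mul, hdil, mul_assoc, inv_mul_cancel₀ (by positivity), mul_one]

theorem le_exp_mul_apply_integral (hf : LogConcave f) (hf1 : ∫ x, f x = 1)
    (hmean : Integrable (fun x => f x • x)) (y : Fin n → ℝ) :
    f y ≤ exp n * f (∫ x, f x • x) :=
  le_exp_mul_of_forall_rpow_mul_one_sub_pow_le n (hf.1 y) (hf.1 _) fun _ hθ0 hθ1 =>
    hf.rpow_mul_one_sub_pow_le hf1 hmean y hθ0 hθ1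

end LogConcave

theorem sup_norm_le_exp_dim_mul_density_at_mean_general {n : ℕ} (f : (Fin n → ℝ) → ℝ)
    (hf_lc : LogConcave f)
    (hf_prob : ∫ x, f x = 1)
    (hf_mean : Integrable (fun x => f x • x)) :
    essSup f volume ≤ Real.exp n * f (∫ x, f x • x) :=
  essSup_le_of_ae_le _ (ae_of_all _ (hf_lc.le_exp_mul_apply_integral hf_prob hf_mean))
    (isCoboundedUnder_le_of_le _ hf_lc.1)

/-- If `X` has a log-concave density `f` on `ℝⁿ` and a finite mean
`E[X] = ∫ x f(x) dx`, then `‖f‖_∞ ≤ eⁿ · f(E[X])`. -/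
theorem sup_norm_le_exp_dim_mul_density_at_mean {n : ℕ} (f : (Fin n → ℝ) → ℝ)
    (hf_meas : Measurable f) (hf_lc : LogConcave f)
    (hf_prob : ∫ x, f x = 1)
    (hf_mean : Integrable (fun x => f x • x)) :
    essSup f volume ≤ Real.exp n * f (∫ x, f x • x) :=
  sup_norm_le_exp_dim_mul_density_at_mean_general f hf_lc hf_prob hf_mean
end

section
/- Let f be a log-concave probability density on ℝⁿ and let X have density f. Then for every 0 < c < 1/e, P{f(X) ≥ cⁿ ‖f‖_∞} ≥ 1 - (e · c · log(1/c))ⁿ, where ‖f‖_∞ is the essential supremum of f. -/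
/-!
Write `M = ‖f‖_∞`. For `0 < a < 1` and any point `x₀`, log-concavity gives
`f x ^ a * f x₀ ^ (1 - a) ≤ f (a • x + (1 - a) • x₀)`, and integrating in `x` yields
`∫ f ^ a ≤ a⁻ⁿ f(x₀)^(a - 1)`, hence `∫ f ^ a ≤ a⁻ⁿ M^(a - 1)` after letting `f x₀ ↑ M`.
On `{f < cⁿ M}` we have `f = f ^ a f ^ (1 - a) ≤ (cⁿ M) ^ (1 - a) f ^ a`, so
`P{f(X) < cⁿ M} ≤ (c ^ (1 - a) / a)ⁿ`. The choice `a = 1 / log (1 / c)`, admissible exactly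
when `c < 1 / e`, makes `c ^ (1 - a) / a = e c log (1 / c)`.
-/

open MeasureTheory
open scoped ENNReal

open Filter Set
open scoped Topology

theorem exists_lt_of_lt_essSup {α : Type*} [MeasurableSpace α] {μ : Measure α} [NeZero μ]
    {g : α → ℝ} {b : ℝ} (hb : ∀ x, b ≤ g x) {m : ℝ} (hm : m < essSup g μ) :
    ∃ x, m < g x := by
  by_contra! h
  exact hm.not_ge (essSup_le_of_ae_le m (ae_of_all _ h) (isCoboundedUnder_le_of_le _ hb))

theorem setLIntegral_setOf_lt_le {α : Type*} [MeasurableSpace α] {μ : Measure α} {g : α → ℝ}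
    (hg : Measurable g) (hg0 : ∀ x, 0 ≤ g x) {p : ℝ} (hp : p ≤ 1) (s : ℝ) :
    ∫⁻ x in {x | g x < s}, ENNReal.ofReal (g x) ∂μ
      ≤ ENNReal.ofReal (s ^ (1 - p)) * ∫⁻ x, ENNReal.ofReal (g x ^ p) ∂μ := by
  have hpt : ∀ x ∈ {x | g x < s},
      ENNReal.ofReal (g x) ≤ ENNReal.ofReal (s ^ (1 - p)) * ENNReal.ofReal (g x ^ p) := by
    intro x (hx : g x < s)
    rw [← ENNReal.ofReal_mul' (Real.rpow_nonneg (hg0 x) _)]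
    refine ENNReal.ofReal_le_ofReal ?_
    calc g x = g x ^ (1 - p) * g x ^ p := by
          rw [← Real.rpow_add' (hg0 x) (by simp), sub_add_cancel, Real.rpow_one]
      _ ≤ s ^ (1 - p) * g x ^ p :=
          mul_le_mul_of_nonneg_right (Real.rpow_le_rpow (hg0 x) hx.le (by linarith))
            (Real.rpow_nonneg (hg0 x) _)
  calc ∫⁻ x in {x | g x < s}, ENNReal.ofReal (g x) ∂μ
      ≤ ∫⁻ x in {x | g x < s}, ENNReal.ofReal (s ^ (1 - p)) * ENNReal.ofReal (g x ^ p) ∂μ :=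
        setLIntegral_mono (by fun_prop) hpt
    _ ≤ ∫⁻ x, ENNReal.ofReal (s ^ (1 - p)) * ENNReal.ofReal (g x ^ p) ∂μ :=
        setLIntegral_le_lintegral _ _
    _ = _ := lintegral_const_mul' _ _ ENNReal.ofReal_ne_top

theorem lintegral_comp_smul_add {E : Type*} [NormedAddCommGroup E] [NormedSpace ℝ E]
    [MeasurableSpace E] [BorelSpace E] [FiniteDimensional ℝ E] (μ : Measure E)
    [μ.IsAddHaarMeasure] {g : E → ℝ≥0∞} (hg : Measurable g) {r : ℝ} (hr : r ≠ 0) (v : E) :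
    ∫⁻ x, g (r • x + v) ∂μ = ENNReal.ofReal |(r ^ Module.finrank ℝ E)⁻¹| * ∫⁻ x, g x ∂μ := by
  calc ∫⁻ x, g (r • x + v) ∂μ = ∫⁻ y, g (y + v) ∂(Measure.map (r • ·) μ) :=
        (lintegral_map (hg.comp (measurable_add_const v)) (measurable_const_smul r)).symm
    _ = ENNReal.ofReal |(r ^ Module.finrank ℝ E)⁻¹| * ∫⁻ y, g (y + v) ∂μ := by
        rw [Measure.map_addHaar_smul μ hr, lintegral_smul_measure, smul_eq_mul]
    _ = _ := by rw [lintegral_add_right_eq_self g v]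

namespace LogConcave

variable {n : ℕ} {f : (Fin n → ℝ) → ℝ}

theorem rpow_mul_lintegral_rpow_le (hf : LogConcave f) (hmeas : Measurable f) {a : ℝ}
    (ha0 : 0 < a) (ha1 : a < 1) (x₀ : Fin n → ℝ) :
    ENNReal.ofReal (f x₀ ^ (1 - a)) * ∫⁻ x, ENNReal.ofReal (f x ^ a)
      ≤ ENNReal.ofReal ((a ^ n)⁻¹) * ∫⁻ x, ENNReal.ofReal (f x) := by
  calc ENNReal.ofReal (f x₀ ^ (1 - a)) * ∫⁻ x, ENNReal.ofReal (f x ^ a)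
      = ∫⁻ x, ENNReal.ofReal (f x ^ a * f x₀ ^ (1 - a)) := by
        rw [← lintegral_const_mul' _ _ ENNReal.ofReal_ne_top]
        refine lintegral_congr fun x => ?_
        rw [ENNReal.ofReal_mul' (Real.rpow_nonneg (hf.1 x₀) _), mul_comm]
    _ ≤ ∫⁻ x, ENNReal.ofReal (f (a • x + (1 - a) • x₀)) :=
        lintegral_mono fun x => ENNReal.ofReal_le_ofReal (hf.2 x x₀ a ha0 ha1)
    _ = ENNReal.ofReal ((a ^ n)⁻¹) * ∫⁻ x, ENNReal.ofReal (f x) := by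
        rw [lintegral_comp_smul_add volume (g := fun y => ENNReal.ofReal (f y)) (by fun_prop)
          ha0.ne', Module.finrank_fin_fun, abs_of_pos (by positivity)]

theorem withDensity_setOf_lt_le (hf : LogConcave f) (hmeas : Measurable f)
    (hdens : ∫⁻ x, ENNReal.ofReal (f x) = 1) {a : ℝ} (ha0 : 0 < a) (ha1 : a < 1)
    {x₀ : Fin n → ℝ} (hx₀ : 0 < f x₀) {s : ℝ} (hs : 0 ≤ s) :
    volume.withDensity (fun x => ENNReal.ofReal (f x)) {x | f x < s}
      ≤ ENNReal.ofReal ((s / f x₀) ^ (1 - a) / a ^ n) := by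
  have hsplit : s ^ (1 - a) = (s / f x₀) ^ (1 - a) * f x₀ ^ (1 - a) := by
    rw [Real.div_rpow hs hx₀.le, div_mul_cancel₀ _ (by positivity)]
  rw [withDensity_apply _ (measurableSet_lt hmeas measurable_const)]
  calc ∫⁻ x in {x | f x < s}, ENNReal.ofReal (f x)
      ≤ ENNReal.ofReal (s ^ (1 - a)) * ∫⁻ x, ENNReal.ofReal (f x ^ a) :=
        setLIntegral_setOf_lt_le hmeas hf.1 ha1.le s
    _ = ENNReal.ofReal ((s / f x₀) ^ (1 - a))
          * (ENNReal.ofReal (f x₀ ^ (1 - a)) * ∫⁻ x, ENNReal.ofReal (f x ^ a)) := by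
        rw [hsplit, ENNReal.ofReal_mul (by positivity), mul_assoc]
    _ ≤ ENNReal.ofReal ((s / f x₀) ^ (1 - a)) * ENNReal.ofReal ((a ^ n)⁻¹) := by
        gcongr
        simpa [hdens] using hf.rpow_mul_lintegral_rpow_le hmeas ha0 ha1 x₀
    _ = ENNReal.ofReal ((s / f x₀) ^ (1 - a) / a ^ n) := by
        rw [← ENNReal.ofReal_mul (by positivity), ← div_eq_mul_inv]

theorem withDensity_setOf_lt_mul_essSup_le (hf : LogConcave f) (hmeas : Measurable f)
    (hdens : ∫⁻ x, ENNReal.ofReal (f x) = 1) {a : ℝ} (ha0 : 0 < a) (ha1 : a < 1)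
    {β : ℝ} (hβ : 0 ≤ β) :
    volume.withDensity (fun x => ENNReal.ofReal (f x)) {x | f x < β * essSup f volume}
      ≤ ENNReal.ofReal (β ^ (1 - a) / a ^ n) := by
  set M := essSup f volume
  rcases le_or_gt M 0 with hM | hM
  · have hempty : {x | f x < β * M} = ∅ :=
      eq_empty_of_forall_notMem fun x hx =>
        (mul_nonpos_of_nonneg_of_nonpos hβ hM).not_gt ((hf.1 x).trans_lt hx)
    simp [hempty]
  have hlim : Tendsto (fun m => ENNReal.ofReal ((β * M / m) ^ (1 - a) / a ^ n)) (𝓝[<] M)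
      (𝓝 (ENNReal.ofReal (β ^ (1 - a) / a ^ n))) := by
    have hcont : ContinuousAt (fun m => ENNReal.ofReal ((β * M / m) ^ (1 - a) / a ^ n)) M :=
      ENNReal.continuous_ofReal.continuousAt.comp <|
        ((continuousAt_const.div continuousAt_id hM.ne').rpow_const
          (Or.inr (by linarith))).div_const _
    simpa [mul_div_assoc, div_self hM.ne'] using hcont.tendsto.mono_left nhdsWithin_le_nhds
  refine ge_of_tendsto hlim ?_
  filter_upwards [Ioo_mem_nhdsLT hM] with m hm
  obtain ⟨x₀, hx₀⟩ := exists_lt_of_lt_essSup hf.1 hm.2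
  have hβM : 0 ≤ β * M := mul_nonneg hβ hM.le
  calc _ ≤ ENNReal.ofReal ((β * M / f x₀) ^ (1 - a) / a ^ n) :=
        hf.withDensity_setOf_lt_le hmeas hdens ha0 ha1 (hm.1.trans hx₀) hβM
    _ ≤ ENNReal.ofReal ((β * M / m) ^ (1 - a) / a ^ n) := by
        gcongr
        exacts [div_nonneg hβM (hm.1.trans hx₀).le, hm.1]

end LogConcave

/-- **Effective support / small-ball estimate**: if `X` has a log-concave density `f`
on `ℝⁿ`, then for every `0 < c < 1/e`,
`P{f(X) ≥ cⁿ ‖f‖_∞} ≥ 1 - (e · c · log(1/c))ⁿ`. -/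
theorem prob_density_ge_small_ball {n : ℕ} (f : (Fin n → ℝ) → ℝ)
    (hf_meas : Measurable f) (hf_lc : LogConcave f)
    (hf_prob : ∫ x, f x = 1) :
    ∀ c : ℝ, 0 < c → c < 1 / Real.exp 1 →
      1 - ENNReal.ofReal ((Real.exp 1 * c * Real.log (1 / c)) ^ n)
        ≤ (volume.withDensity (fun x => ENNReal.ofReal (f x)))
            {x | c ^ n * essSup f volume ≤ f x} := by
  intro c hc0 hc1
  have hdens : ∫⁻ x, ENNReal.ofReal (f x) = 1 := by
    rw [← ofReal_integral_eq_lintegral_ofReal (.of_integral_ne_zero (hf_prob ▸ one_ne_zero))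
      (ae_of_all _ hf_lc.1), hf_prob, ENNReal.ofReal_one]
  have : IsProbabilityMeasure (volume.withDensity fun x => ENNReal.ofReal (f x)) :=
    ⟨by rw [withDensity_apply _ MeasurableSet.univ, Measure.restrict_univ, hdens]⟩
  set L := Real.log (1 / c) with hL_def
  have hcL : c = Real.exp (-L) := by
    rw [hL_def, one_div, Real.log_inv, neg_neg, Real.exp_log hc0]
  have hL : 1 < L := by
    rwa [lt_one_div hc0 (Real.exp_pos 1), ← Real.log_lt_log_iff (Real.exp_pos 1) (by positivity),
      Real.log_exp] at hc1
  have hbound : (c ^ n) ^ (1 - L⁻¹) / L⁻¹ ^ n = (Real.exp 1 * c * L) ^ n := by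
    have hexp : -L * (1 - L⁻¹) = 1 + -L := by field_simp; ring
    rw [← Real.rpow_pow_comm hc0.le, inv_pow, div_inv_eq_mul, ← mul_pow]
    nth_rw 1 [hcL]
    rw [← Real.exp_mul, hexp, Real.exp_add, ← hcL]
  have hlow := hf_lc.withDensity_setOf_lt_mul_essSup_le hf_meas hdens (inv_pos.2 (by linarith))
    (inv_lt_one_of_one_lt₀ hL) (pow_nonneg hc0.le n)
  rw [hbound] at hlow
  have hcompl : {x | c ^ n * essSup f volume ≤ f x} = {x | f x < c ^ n * essSup f volume}ᶜ := by
    ext x; simp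
  rw [hcompl, prob_compl_eq_one_sub (measurableSet_lt hf_meas measurable_const)]
  exact tsub_le_tsub_left hlow 1
end
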